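/- arXiv:gr-qc/9606065 — 2 statements merged into one kernel-verified Lean document; each statement's English description precedes it below -/
import Mathlib

section
/- Uniqueness of harmonic functions on the upper half-plane from Cauchy data on a boundary arc (half-plane chart form of the paper's Uniqueness Lemma): let a < b be real numbers and let U = {z ∈ ℂ : Im z > 0}. Suppose f, g : ℂ → ℂ are holomorphic on U, and f, g and their derivatives f′, g′ all extend continuously to U ∪ (a,b), i.e. for every x ∈ (a,b) the limits of f(z), g(z), f′(z), g′(z) as z → x with z ∈ U exist. If for every x ∈ (a,b) these boundary values satisfy f(x) + conj(g(x)) = 0 and −f′(x) + conj(g′(x)) = 0, then f(z) + conj(g(z)) = 0 for every z ∈ U. -/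
open Complex Filter Set Topology
open scoped Interval



/-- Anti-holomorphic chain rule: reflection of a differentiable function. -/
private lemma hasDerivAt_conj_conj {g : ℂ → ℂ} {z d : ℂ}
    (h : HasDerivAt g d ((starRingEnd ℂ) z)) :
    HasDerivAt (fun w => (starRingEnd ℂ) (g ((starRingEnd ℂ) w))) ((starRingEnd ℂ) d) z := by
  rw [hasDerivAt_iff_tendsto] at h ⊢
  have hconj : Tendsto (fun w : ℂ => (starRingEnd ℂ) w) (𝓝 z) (𝓝 ((starRingEnd ℂ) z)) :=
    (continuous_star.tendsto z)
  have := h.comp hconj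
  refine this.congr (fun w => ?_)
  simp only [Function.comp]
  have h1 : ‖(starRingEnd ℂ) w - (starRingEnd ℂ) z‖ = ‖w - z‖ := by
    rw [← map_sub]; exact norm_star _
  rw [h1]
  congr 1
  have : g ((starRingEnd ℂ) w) - g ((starRingEnd ℂ) z) -
      ((starRingEnd ℂ) w - (starRingEnd ℂ) z) • d =
      (starRingEnd ℂ) ((starRingEnd ℂ) (g ((starRingEnd ℂ) w)) -
        (starRingEnd ℂ) (g ((starRingEnd ℂ) z)) - (w - z) • (starRingEnd ℂ) d) := by
    simp only [map_sub, smul_eq_mul, map_mul, Complex.conj_conj]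
  rw [this, starRingEnd_apply]
  exact norm_star _

private lemma neBot_im_pos (y : ℝ) : (𝓝[{z : ℂ | 0 < z.im}] (y : ℂ)).NeBot := by
  rw [← mem_closure_iff_nhdsWithin_neBot, Complex.closure_setOf_lt_im]
  simp

private lemma neBot_im_neg (y : ℝ) : (𝓝[{z : ℂ | z.im < 0}] (y : ℂ)).NeBot := by
  rw [← mem_closure_iff_nhdsWithin_neBot, Complex.closure_setOf_im_lt]
  simp

/-- automatic continuity of a boundary-value function -/
private lemma boundaryValue_continuousWithinAt {f : ℂ → ℂ} {F : ℝ → ℂ} {a b : ℝ}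
    (hF : ∀ x ∈ Ioo a b, Tendsto f (𝓝[{z : ℂ | 0 < z.im}] (x : ℂ)) (𝓝 (F x)))
    {x : ℝ} (hx : x ∈ Ioo a b) : ContinuousWithinAt F (Ioo a b) x := by
  rw [Metric.continuousWithinAt_iff]
  intro ε hε
  obtain ⟨δ, hδ, hδ'⟩ := Metric.tendsto_nhdsWithin_nhds.mp (hF x hx) (ε / 3) (by linarith)
  refine ⟨δ / 2, by linarith, fun y hy hyx => ?_⟩
  obtain ⟨δ₂, hδ₂, hδ₂'⟩ := Metric.tendsto_nhdsWithin_nhds.mp (hF y hy) (ε / 3) (by linarith)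
  set r : ℝ := min (δ / 2) δ₂ / 2 with hr
  have hr0 : 0 < r := by positivity
  set z : ℂ := (y : ℂ) + (r : ℂ) * I with hz
  have hzU : z ∈ {z : ℂ | 0 < z.im} := by simp [hz, hr0]
  have hdzy : dist z (y : ℂ) = r := by
    simp only [hz, Complex.dist_eq, add_sub_cancel_left]
    rw [norm_mul, Complex.norm_I, mul_one, Complex.norm_of_nonneg hr0.le]
  have h1 : dist (f z) (F y) < ε / 3 := by
    apply hδ₂' hzU
    rw [hdzy]
    have : r ≤ δ₂ / 2 := by
      rw [hr]
      have := min_le_right (δ / 2) δ₂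
      linarith
    linarith
  have h2 : dist (f z) (F x) < ε / 3 := by
    apply hδ' hzU
    calc dist z (x : ℂ) ≤ dist z (y : ℂ) + dist (y : ℂ) (x : ℂ) := dist_triangle _ _ _
      _ = r + dist y x := by rw [hdzy, Complex.isometry_ofReal.dist_eq]
      _ < δ / 4 + δ / 2 := by
          apply add_lt_add_of_le_of_lt _ hyx
          rw [hr]
          have := min_le_left (δ / 2) δ₂
          linarith
      _ < δ := by linarith
  calc dist (F y) (F x) ≤ dist (F y) (f z) + dist (f z) (F x) := dist_triangle _ _ _
    _ = dist (f z) (F y) + dist (f z) (F x) := by rw [dist_comm (F y)]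
    _ < ε / 3 + ε / 3 := add_lt_add h1 h2
    _ < ε := by linarith



noncomputable def rectSum (H : ℂ → ℂ) (z w : ℂ) : ℂ :=
  (∫ x : ℝ in z.re..w.re, H (x + z.im * I)) - (∫ x : ℝ in z.re..w.re, H (x + w.im * I)) +
    I • (∫ y : ℝ in z.im..w.im, H (w.re + y * I)) - I • ∫ y : ℝ in z.im..w.im, H (z.re + y * I)

private lemma reProdIm_mono {s₁ s₂ t₁ t₂ : Set ℝ} (h1 : s₁ ⊆ s₂) (h2 : t₁ ⊆ t₂) :
    s₁ ×ℂ t₁ ⊆ s₂ ×ℂ t₂ := fun z hz => by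
  rw [mem_reProdIm] at hz ⊢
  exact ⟨h1 hz.1, h2 hz.2⟩

private lemma integrable_vert {s : Set ℂ} {H : ℂ → ℂ} (Hc : ContinuousOn H s)
    (x y1 y2 : ℝ) (h : ∀ y ∈ [[y1, y2]], ((x : ℂ) + (y : ℂ) * I) ∈ s) :
    IntervalIntegrable (fun y : ℝ => H ((x : ℂ) + (y : ℂ) * I)) MeasureTheory.volume y1 y2 := by
  apply ContinuousOn.intervalIntegrable
  exact Hc.comp (Continuous.continuousOn (by continuity)) (fun y hy => h y hy)

private lemma integrable_horiz {s : Set ℂ} {H : ℂ → ℂ} (Hc : ContinuousOn H s)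
    (x1 x2 y : ℝ) (h : ∀ x ∈ [[x1, x2]], ((x : ℂ) + (y : ℂ) * I) ∈ s) :
    IntervalIntegrable (fun x : ℝ => H ((x : ℂ) + (y : ℂ) * I)) MeasureTheory.volume x1 x2 := by
  apply ContinuousOn.intervalIntegrable
  exact Hc.comp (Continuous.continuousOn (by continuity)) (fun x hx => h x hx)

/-- Goursat for rectangles not meeting the line `im = 0` in their interior. -/
private lemma rectSum_eq_zero_off {s : Set ℂ} {H : ℂ → ℂ}
    (Hc : ContinuousOn H s)
    (Hd : ∀ z ∈ s, z.im ≠ 0 → DifferentiableAt ℂ H z)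
    (z w : ℂ) (hsub : [[z.re, w.re]] ×ℂ [[z.im, w.im]] ⊆ s)
    (hnot : (0 : ℝ) ∉ Ioo (min z.im w.im) (max z.im w.im)) :
    rectSum H z w = 0 := by
  rw [rectSum]
  apply integral_boundary_rect_eq_zero_of_continuousOn_of_differentiableOn H z w (Hc.mono hsub)
  intro p hp
  rw [mem_reProdIm] at hp
  have hps : p ∈ s := hsub (by
    rw [mem_reProdIm]
    constructor
    · rw [← Icc_min_max]; exact Ioo_subset_Icc_self hp.1
    · rw [← Icc_min_max]; exact Ioo_subset_Icc_self hp.2)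
  have him : p.im ≠ 0 := by
    intro h0
    exact hnot (h0 ▸ hp.2)
  exact (Hd p hps him).differentiableWithinAt

/-- Goursat for arbitrary rectangles: split along the line `im = 0`. -/
private lemma rectSum_eq_zero {s : Set ℂ} {H : ℂ → ℂ}
    (Hc : ContinuousOn H s)
    (Hd : ∀ z ∈ s, z.im ≠ 0 → DifferentiableAt ℂ H z)
    (z w : ℂ) (hsub : [[z.re, w.re]] ×ℂ [[z.im, w.im]] ⊆ s) :
    rectSum H z w = 0 := by
  by_cases hc : (0 : ℝ) ∈ Ioo (min z.im w.im) (max z.im w.im)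
  · have h0m : (0 : ℝ) ∈ [[z.im, w.im]] := by
      rw [← Icc_min_max]; exact Ioo_subset_Icc_self hc
    have hsub1 : [[z.re, w.re]] ×ℂ [[z.im, (0 : ℝ)]] ⊆ s :=
      (reProdIm_mono (le_refl _) (uIcc_subset_uIcc left_mem_uIcc h0m)).trans hsub
    have hsub2 : [[z.re, w.re]] ×ℂ [[(0 : ℝ), w.im]] ⊆ s :=
      (reProdIm_mono (le_refl _) (uIcc_subset_uIcc h0m right_mem_uIcc)).trans hsub
    have hnot1 : (0 : ℝ) ∉ Ioo (min z.im (0:ℝ)) (max z.im (0:ℝ)) := by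
      rcases le_total z.im 0 with h' | h'
      · rw [min_eq_left h', max_eq_right h']; simp
      · rw [min_eq_right h', max_eq_left h']; simp
    have hnot2 : (0 : ℝ) ∉ Ioo (min (0:ℝ) w.im) (max (0:ℝ) w.im) := by
      rcases le_total w.im 0 with h' | h'
      · rw [min_eq_right h', max_eq_left h']; simp
      · rw [min_eq_left h', max_eq_right h']; simp
    have E1 := rectSum_eq_zero_off Hc Hd z ((w.re : ℝ) : ℂ) (by simpa using hsub1) (by simpa using hnot1)
    have E2 := rectSum_eq_zero_off Hc Hd ((z.re : ℝ) : ℂ) w (by simpa using hsub2) (by simpa using hnot2)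
    rw [rectSum] at E1 E2 ⊢
    simp only [Complex.ofReal_re, Complex.ofReal_im, Complex.ofReal_zero, zero_mul, add_zero]
      at E1 E2
    -- split the two vertical integrals at 0
    have hv1 : IntervalIntegrable (fun y : ℝ => H ((w.re : ℂ) + (y : ℂ) * I))
        MeasureTheory.volume z.im 0 := integrable_vert Hc w.re z.im 0
      (fun y hy => hsub1 (by rw [mem_reProdIm]; simp [right_mem_uIcc, hy]))
    have hv2 : IntervalIntegrable (fun y : ℝ => H ((w.re : ℂ) + (y : ℂ) * I))
        MeasureTheory.volume 0 w.im := integrable_vert Hc w.re 0 w.im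
      (fun y hy => hsub2 (by rw [mem_reProdIm]; simp [right_mem_uIcc, hy]))
    have hv3 : IntervalIntegrable (fun y : ℝ => H ((z.re : ℂ) + (y : ℂ) * I))
        MeasureTheory.volume z.im 0 := integrable_vert Hc z.re z.im 0
      (fun y hy => hsub1 (by rw [mem_reProdIm]; simp [left_mem_uIcc, hy]))
    have hv4 : IntervalIntegrable (fun y : ℝ => H ((z.re : ℂ) + (y : ℂ) * I))
        MeasureTheory.volume 0 w.im := integrable_vert Hc z.re 0 w.im
      (fun y hy => hsub2 (by rw [mem_reProdIm]; simp [left_mem_uIcc, hy]))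
    have S1 := intervalIntegral.integral_add_adjacent_intervals hv1 hv2
    have S2 := intervalIntegral.integral_add_adjacent_intervals hv3 hv4
    simp only [smul_eq_mul] at E1 E2 ⊢
    rw [← S1, ← S2]
    linear_combination E1 + E2
  · exact rectSum_eq_zero_off Hc Hd z w hsub hc

private lemma abs_sub_le_of_mem_uIoc {t p q : ℝ} (h : t ∈ Ι p q) : |t - p| ≤ |q - p| := by
  rw [Set.mem_uIoc] at h
  have h1 := le_abs_self (q - p)
  have h2 := neg_abs_le (q - p)
  rcases h with ⟨h3, h4⟩ | ⟨h3, h4⟩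
  · rw [abs_of_pos (by linarith : (0:ℝ) < t - p)]; linarith
  · rw [abs_of_nonpos (by linarith : t - p ≤ 0)]; linarith

/-- Morera-type result: on an open axis-parallel rectangle, a continuous function all of whose
rectangle contour integrals vanish is complex differentiable. -/
private lemma differentiableAt_of_rectSum {x1 x2 y1 y2 : ℝ} {H : ℂ → ℂ}
    (Hc : ContinuousOn H (Ioo x1 x2 ×ℂ Ioo y1 y2))
    (hzero : ∀ z w : ℂ, [[z.re, w.re]] ×ℂ [[z.im, w.im]] ⊆ Ioo x1 x2 ×ℂ Ioo y1 y2 →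
      rectSum H z w = 0) :
    ∀ z ∈ Ioo x1 x2 ×ℂ Ioo y1 y2, DifferentiableAt ℂ H z := by
  set Q : Set ℂ := Ioo x1 x2 ×ℂ Ioo y1 y2 with hQdef
  have hQo : IsOpen Q := isOpen_Ioo.reProdIm isOpen_Ioo
  intro z₀ hz₀Q
  have hz₀ := mem_reProdIm.mp hz₀Q
  set V : ℂ → ℂ := fun w =>
    I • (∫ t : ℝ in z₀.im..w.im, H ((z₀.re : ℂ) + (t : ℂ) * I)) +
      ∫ t : ℝ in z₀.re..w.re, H ((t : ℂ) + (w.im : ℂ) * I) with hVdef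
  have key : ∀ w ∈ Q, HasDerivAt V (H w) w := by
    intro w hwQ
    have hw := mem_reProdIm.mp hwQ
    rw [hasDerivAt_iff_isLittleO, Asymptotics.isLittleO_iff]
    intro ε hε
    have hHw : ContinuousAt H w := Hc.continuousAt (hQo.mem_nhds hwQ)
    obtain ⟨δ₁, hδ₁, hballs⟩ := Metric.continuousAt_iff.mp hHw (ε / 2) (half_pos hε)
    filter_upwards [Metric.ball_mem_nhds w (by positivity : (0:ℝ) < δ₁ / 2),
      hQo.mem_nhds hwQ] with u hud huQ
    rw [Metric.mem_ball] at hud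
    have hu := mem_reProdIm.mp huQ
    -- integrability of all the pieces
    have iv1 : IntervalIntegrable (fun t : ℝ => H ((z₀.re : ℂ) + (t : ℂ) * I))
        MeasureTheory.volume z₀.im w.im := integrable_vert Hc _ _ _ (fun t ht => by
      rw [mem_reProdIm]
      refine ⟨by simpa using hz₀.1, by simpa using Set.ordConnected_Ioo.uIcc_subset hz₀.2 hw.2 ht⟩)
    have iv2 : IntervalIntegrable (fun t : ℝ => H ((z₀.re : ℂ) + (t : ℂ) * I))
        MeasureTheory.volume w.im u.im := integrable_vert Hc _ _ _ (fun t ht => by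
      rw [mem_reProdIm]
      refine ⟨by simpa using hz₀.1, by simpa using Set.ordConnected_Ioo.uIcc_subset hw.2 hu.2 ht⟩)
    have iv3 : IntervalIntegrable (fun t : ℝ => H ((u.re : ℂ) + (t : ℂ) * I))
        MeasureTheory.volume w.im u.im := integrable_vert Hc _ _ _ (fun t ht => by
      rw [mem_reProdIm]
      refine ⟨by simpa using hu.1, by simpa using Set.ordConnected_Ioo.uIcc_subset hw.2 hu.2 ht⟩)
    have ih1 : IntervalIntegrable (fun t : ℝ => H ((t : ℂ) + (w.im : ℂ) * I))
        MeasureTheory.volume z₀.re w.re := integrable_horiz Hc _ _ _ (fun t ht => by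
      rw [mem_reProdIm]
      refine ⟨by simpa using Set.ordConnected_Ioo.uIcc_subset hz₀.1 hw.1 ht, by simpa using hw.2⟩)
    have ih2 : IntervalIntegrable (fun t : ℝ => H ((t : ℂ) + (w.im : ℂ) * I))
        MeasureTheory.volume w.re u.re := integrable_horiz Hc _ _ _ (fun t ht => by
      rw [mem_reProdIm]
      refine ⟨by simpa using Set.ordConnected_Ioo.uIcc_subset hw.1 hu.1 ht, by simpa using hw.2⟩)
    have S1 := (intervalIntegral.integral_add_adjacent_intervals iv1 iv2).symm
    have S2 := (intervalIntegral.integral_add_adjacent_intervals ih1 ih2).symm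
    -- the vanishing rectangle integral, corners (z₀.re, w.im) and (u.re, u.im)
    have E := hzero ((z₀.re : ℂ) + (w.im : ℂ) * I) u (by
      intro p hp
      rw [mem_reProdIm] at hp ⊢
      simp only [Complex.add_re, Complex.add_im, Complex.ofReal_re, Complex.ofReal_im,
        Complex.mul_re, Complex.mul_im, Complex.I_re, Complex.I_im, mul_zero, mul_one,
        zero_mul, sub_zero, zero_add, add_zero, zero_sub, neg_zero] at hp
      exact ⟨Set.ordConnected_Ioo.uIcc_subset hz₀.1 hu.1 hp.1,
        Set.ordConnected_Ioo.uIcc_subset hw.2 hu.2 hp.2⟩)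
    rw [rectSum] at E
    simp only [Complex.add_re, Complex.add_im, Complex.ofReal_re, Complex.ofReal_im,
      Complex.mul_re, Complex.mul_im, Complex.I_re, Complex.I_im, mul_zero, mul_one,
      zero_mul, sub_zero, zero_add, add_zero, zero_sub, neg_zero] at E
    -- constant integrals
    have T1 : (∫ t : ℝ in w.re..u.re, (H ((t : ℂ) + (w.im : ℂ) * I) - H w))
        = (∫ t : ℝ in w.re..u.re, H ((t : ℂ) + (w.im : ℂ) * I)) - (u.re - w.re) • H w := by
      rw [intervalIntegral.integral_sub ih2 intervalIntegrable_const,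
        intervalIntegral.integral_const]
    have T2 : (∫ t : ℝ in w.im..u.im, (H ((u.re : ℂ) + (t : ℂ) * I) - H w))
        = (∫ t : ℝ in w.im..u.im, H ((u.re : ℂ) + (t : ℂ) * I)) - (u.im - w.im) • H w := by
      rw [intervalIntegral.integral_sub iv3 intervalIntegrable_const,
        intervalIntegral.integral_const]
    have hre : (u - w) = ((u.re - w.re : ℝ) : ℂ) + ((u.im - w.im : ℝ) : ℂ) * I := by
      simp [Complex.ext_iff]
    have keyEq : V u - V w - (u - w) • H w =
        (∫ t : ℝ in w.re..u.re, (H ((t : ℂ) + (w.im : ℂ) * I) - H w)) +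
          I • (∫ t : ℝ in w.im..u.im, (H ((u.re : ℂ) + (t : ℂ) * I) - H w)) := by
      simp only [hVdef]
      simp only [smul_eq_mul, Complex.real_smul] at T1 T2 E ⊢
      rw [S1]
      linear_combination -E + S2 - T1 - I * T2 - H w * hre
    rw [keyEq]
    -- now the estimate
    have hb1 : ‖∫ t : ℝ in w.re..u.re, (H ((t : ℂ) + (w.im : ℂ) * I) - H w)‖
        ≤ (ε / 2) * |u.re - w.re| := by
      apply intervalIntegral.norm_integral_le_of_norm_le_const
      intro t ht
      have h1 : |t - w.re| ≤ |u.re - w.re| := abs_sub_le_of_mem_uIoc ht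
      have h2 : dist ((t : ℂ) + (w.im : ℂ) * I) w = |t - w.re| := by
        rw [Complex.dist_eq]
        have : (t : ℂ) + (w.im : ℂ) * I - w = ((t - w.re : ℝ) : ℂ) := by
          simp [Complex.ext_iff]
        rw [this, Complex.norm_real, Real.norm_eq_abs]
      have h3 : dist ((t : ℂ) + (w.im : ℂ) * I) w < δ₁ := by
        rw [h2]
        have h4 : |u.re - w.re| = |(u - w).re| := by simp [Complex.sub_re]
        have h5 : |(u - w).re| ≤ ‖u - w‖ := Complex.abs_re_le_norm _
        have h6 : ‖u - w‖ = dist u w := (Complex.dist_eq u w).symm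
        linarith [h1]
      rw [← dist_eq_norm]
      exact le_of_lt (hballs h3)
    have hb2 : ‖∫ t : ℝ in w.im..u.im, (H ((u.re : ℂ) + (t : ℂ) * I) - H w)‖
        ≤ (ε / 2) * |u.im - w.im| := by
      apply intervalIntegral.norm_integral_le_of_norm_le_const
      intro t ht
      have h1 : |t - w.im| ≤ |u.im - w.im| := abs_sub_le_of_mem_uIoc ht
      have h3 : dist ((u.re : ℂ) + (t : ℂ) * I) w < δ₁ := by
        rw [Complex.dist_eq]
        have h2 : ‖(u.re : ℂ) + (t : ℂ) * I - w‖
            ≤ |((u.re : ℂ) + (t : ℂ) * I - w).re| + |((u.re : ℂ) + (t : ℂ) * I - w).im| :=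
          Complex.norm_le_abs_re_add_abs_im _
        have h4 : ((u.re : ℂ) + (t : ℂ) * I - w).re = u.re - w.re := by simp
        have h5 : ((u.re : ℂ) + (t : ℂ) * I - w).im = t - w.im := by simp
        rw [h4, h5] at h2
        have h6 : |u.re - w.re| ≤ ‖u - w‖ := by
          have := Complex.abs_re_le_norm (u - w); simpa [Complex.sub_re] using this
        have h7 : |u.im - w.im| ≤ ‖u - w‖ := by
          have := Complex.abs_im_le_norm (u - w); simpa [Complex.sub_im] using this
        have h8 : ‖u - w‖ = dist u w := (Complex.dist_eq u w).symm
        linarith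
      rw [← dist_eq_norm]
      exact le_of_lt (hballs h3)
    have h6 : |u.re - w.re| ≤ ‖u - w‖ := by
      have := Complex.abs_re_le_norm (u - w)
      simpa [Complex.sub_re] using this
    have h7 : |u.im - w.im| ≤ ‖u - w‖ := by
      have := Complex.abs_im_le_norm (u - w)
      simpa [Complex.sub_im] using this
    calc ‖(∫ t : ℝ in w.re..u.re, (H ((t : ℂ) + (w.im : ℂ) * I) - H w)) +
          I • (∫ t : ℝ in w.im..u.im, (H ((u.re : ℂ) + (t : ℂ) * I) - H w))‖
        ≤ ‖∫ t : ℝ in w.re..u.re, (H ((t : ℂ) + (w.im : ℂ) * I) - H w)‖ +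
          ‖I • (∫ t : ℝ in w.im..u.im, (H ((u.re : ℂ) + (t : ℂ) * I) - H w))‖ := norm_add_le _ _
      _ = ‖∫ t : ℝ in w.re..u.re, (H ((t : ℂ) + (w.im : ℂ) * I) - H w)‖ +
          ‖∫ t : ℝ in w.im..u.im, (H ((u.re : ℂ) + (t : ℂ) * I) - H w)‖ := by
          rw [norm_smul, Complex.norm_I, one_mul]
      _ ≤ (ε / 2) * |u.re - w.re| + (ε / 2) * |u.im - w.im| := add_le_add hb1 hb2
      _ ≤ (ε / 2) * ‖u - w‖ + (ε / 2) * ‖u - w‖ := by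
          apply add_le_add <;> exact mul_le_mul_of_nonneg_left (by assumption) (by linarith)
      _ = ε * ‖u - w‖ := by ring
  -- conclude: V is holomorphic on Q, hence analytic, hence H = deriv V is differentiable
  have hVd : DifferentiableOn ℂ V Q := fun w hw => (key w hw).differentiableAt.differentiableWithinAt
  have hVa : AnalyticOnNhd ℂ V Q := hVd.analyticOnNhd hQo
  have hDa : AnalyticAt ℂ (deriv V) z₀ := hVa.deriv z₀ hz₀Q
  have heq : deriv V =ᶠ[𝓝 z₀] H :=
    eventuallyEq_of_mem (hQo.mem_nhds hz₀Q) (fun w hw => (key w hw).deriv)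
  exact (heq.differentiableAt_iff).mp hDa.differentiableAt

private lemma tendsto_conj_L_U (x : ℝ) :
    Tendsto (fun w : ℂ => (starRingEnd ℂ) w) (𝓝[{z : ℂ | z.im < 0}] (x : ℂ))
      (𝓝[{z : ℂ | 0 < z.im}] (x : ℂ)) := by
  have hc : ContinuousWithinAt (fun w : ℂ => (starRingEnd ℂ) w) {z : ℂ | z.im < 0} (x : ℂ) :=
    continuous_star.continuousWithinAt
  have hm : MapsTo (fun w : ℂ => (starRingEnd ℂ) w) {z : ℂ | z.im < 0} {z : ℂ | 0 < z.im} :=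
    fun w hw => by
      simp only [mem_setOf_eq, Complex.conj_im]
      simp only [mem_setOf_eq] at hw
      linarith
  have := hc.tendsto_nhdsWithin hm
  simpa [Complex.conj_ofReal] using this

/-- Uniqueness of harmonic functions on the upper half-plane from Cauchy data on a
boundary arc: if `f, g` are holomorphic on the open upper half-plane `U`, and `f`, `g`,
`f'`, `g'` all extend continuously to `U ∪ (a,b)` with boundary values `F, G, F', G'`
satisfying `F x + conj (G x) = 0` and `-F' x + conj (G' x) = 0` on `(a,b)`, then
`f z + conj (g z) = 0` on all of `U`. -/
theorem upper_half_plane_cauchy_data_uniqueness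
    (a b : ℝ) (hab : a < b) (f g : ℂ → ℂ)
    (hf : DifferentiableOn ℂ f {z : ℂ | 0 < z.im})
    (hg : DifferentiableOn ℂ g {z : ℂ | 0 < z.im})
    (F G F' G' : ℝ → ℂ)
    (hF : ∀ x ∈ Ioo a b,
      Tendsto f (nhdsWithin (x : ℂ) {z : ℂ | 0 < z.im}) (nhds (F x)))
    (hG : ∀ x ∈ Ioo a b,
      Tendsto g (nhdsWithin (x : ℂ) {z : ℂ | 0 < z.im}) (nhds (G x)))
    (hF' : ∀ x ∈ Ioo a b,
      Tendsto (deriv f) (nhdsWithin (x : ℂ) {z : ℂ | 0 < z.im}) (nhds (F' x)))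
    (hG' : ∀ x ∈ Ioo a b,
      Tendsto (deriv g) (nhdsWithin (x : ℂ) {z : ℂ | 0 < z.im}) (nhds (G' x)))
    (hval : ∀ x ∈ Ioo a b, F x + starRingEnd ℂ (G x) = 0)
    (hnorm : ∀ x ∈ Ioo a b, -F' x + starRingEnd ℂ (G' x) = 0) :
    ∀ z : ℂ, 0 < z.im → f z + starRingEnd ℂ (g z) = 0 := by
  set U : Set ℂ := {z : ℂ | 0 < z.im} with hUdef
  set L : Set ℂ := {z : ℂ | z.im < 0} with hLdef
  set Q : Set ℂ := Ioo a b ×ℂ Ioo (-1 : ℝ) 1 with hQdef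
  set s : Set ℂ := U ∪ L ∪ Q with hsdef
  have hUo : IsOpen U := isOpen_lt continuous_const Complex.continuous_im
  have hLo : IsOpen L := isOpen_lt Complex.continuous_im continuous_const
  have hQo : IsOpen Q := isOpen_Ioo.reProdIm isOpen_Ioo
  have hso : IsOpen s := (hUo.union hLo).union hQo
  have hUs : U ⊆ s := fun z hz => Or.inl (Or.inl hz)
  have hLs : L ⊆ s := fun z hz => Or.inl (Or.inr hz)
  have hQs : Q ⊆ s := fun z hz => Or.inr hz
  set H : ℂ → ℂ := fun z => if 0 < z.im then f z
    else if z.im < 0 then -((starRingEnd ℂ) (g ((starRingEnd ℂ) z))) else F z.re with hHdef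
  have hHU : ∀ z ∈ U, H z = f z := fun z hz => if_pos hz
  have hHL : ∀ z ∈ L, H z = -((starRingEnd ℂ) (g ((starRingEnd ℂ) z))) := fun z hz => by
    have hzlt : z.im < 0 := hz
    rw [hHdef]
    simp only
    rw [if_neg (by linarith), if_pos hzlt]
  have hconjL : ∀ z ∈ L, (starRingEnd ℂ) z ∈ U := fun z hz => by
    simp only [hUdef, mem_setOf_eq, Complex.conj_im]
    simp only [hLdef, mem_setOf_eq] at hz
    linarith
  have hfd : ∀ z ∈ U, DifferentiableAt ℂ f z :=
    fun z hz => (hf z hz).differentiableAt (hUo.mem_nhds hz)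
  have hgd : ∀ z ∈ U, DifferentiableAt ℂ g z :=
    fun z hz => (hg z hz).differentiableAt (hUo.mem_nhds hz)
  have hkd : ∀ z ∈ L, HasDerivAt (fun w => -((starRingEnd ℂ) (g ((starRingEnd ℂ) w))))
      (-((starRingEnd ℂ) (deriv g ((starRingEnd ℂ) z)))) z := fun z hz =>
    (hasDerivAt_conj_conj ((hgd _ (hconjL z hz)).hasDerivAt)).neg
  -- differentiability off the real line
  have Hd : ∀ z ∈ s, z.im ≠ 0 → DifferentiableAt ℂ H z := by
    intro z _ him
    rcases him.lt_or_gt with hneg | hpos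
    · have h1 : DifferentiableAt ℂ (fun w => -((starRingEnd ℂ) (g ((starRingEnd ℂ) w)))) z :=
        (hkd z hneg).differentiableAt
      exact (eventuallyEq_of_mem (hLo.mem_nhds hneg) hHL).differentiableAt_iff.mpr h1
    · exact (eventuallyEq_of_mem (hUo.mem_nhds hpos) hHU).differentiableAt_iff.mpr (hfd z hpos)
  -- continuity on s
  have Hc : ContinuousOn H s := by
    intro z hz
    rcases lt_trichotomy z.im 0 with hneg | h0 | hpos
    · have h1 : ContinuousAt (fun w => -((starRingEnd ℂ) (g ((starRingEnd ℂ) w)))) z :=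
        (hkd z hneg).differentiableAt.continuousAt
      exact ((h1.congr (eventuallyEq_of_mem (hLo.mem_nhds hneg) fun w hw =>
        (hHL w hw).symm))).continuousWithinAt
    · -- boundary point
      have hzQ : z ∈ Q := by
        rcases hz with (hzU | hzL) | hzQ
        · simp only [hUdef, mem_setOf_eq, h0] at hzU; exact absurd hzU (lt_irrefl 0)
        · simp only [hLdef, mem_setOf_eq, h0] at hzL; exact absurd hzL (lt_irrefl 0)
        · exact hzQ
      set x : ℝ := z.re with hxdef
      have hxab : x ∈ Ioo a b := (mem_reProdIm.mp hzQ).1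
      have hzx : z = (x : ℂ) := Complex.ext (by simp [hxdef]) (by simp [h0])
      apply ContinuousAt.continuousWithinAt
      rw [hzx]
      have hHx : H ((x : ℂ)) = F x := by
        rw [hHdef]; simp
      unfold ContinuousAt
      rw [hHx]
      have huniv : (univ : Set ℂ) = (U ∪ L) ∪ {w : ℂ | w.im = 0} := by
        ext w
        simp only [mem_univ, mem_union, mem_setOf_eq, true_iff, hUdef, hLdef]
        rcases lt_trichotomy w.im 0 with h | h | h
        · exact Or.inl (Or.inr h)
        · exact Or.inr h
        · exact Or.inl (Or.inl h)
      rw [← nhdsWithin_univ, huniv, nhdsWithin_union, nhdsWithin_union, tendsto_sup, tendsto_sup]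
      refine ⟨⟨?_, ?_⟩, ?_⟩
      · exact (hF x hxab).congr'
          (eventuallyEq_of_mem self_mem_nhdsWithin fun w hw => (hHU w hw).symm)
      · have hstarc : Continuous fun y : ℂ => (starRingEnd ℂ) y := continuous_star
        have t2 := (hG x hxab).comp (tendsto_conj_L_U x)
        have t3 := ((hstarc.tendsto (G x)).comp t2).neg
        have hFx : -((starRingEnd ℂ) (G x)) = F x := by linear_combination - hval x hxab
        rw [hFx] at t3
        refine t3.congr'
          (eventuallyEq_of_mem self_mem_nhdsWithin fun w hw => ?_)
        exact (hHL w hw).symm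
      · have hFc : ContinuousWithinAt F (Ioo a b) x := boundaryValue_continuousWithinAt hF hxab
        set r : ℝ := min (x - a) (b - x) with hrdef
        have hr : 0 < r := by
          rcases hxab with ⟨h1, h2⟩
          apply lt_min <;> linarith
        have hmem : Metric.ball ((x : ℂ)) r ∈ 𝓝[{w : ℂ | w.im = 0}] ((x : ℂ)) :=
          mem_nhdsWithin_of_mem_nhds (Metric.ball_mem_nhds _ hr)
        rw [← nhdsWithin_inter_of_mem' hmem]
        have t1 : Tendsto (fun w : ℂ => w.re)
            (𝓝[{w : ℂ | w.im = 0} ∩ Metric.ball ((x : ℂ)) r] ((x : ℂ))) (𝓝[Ioo a b] x) := by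
          have hmt : MapsTo (fun w : ℂ => w.re)
              ({w : ℂ | w.im = 0} ∩ Metric.ball ((x : ℂ)) r) (Ioo a b) := by
            intro w hw
            have hd : dist w ((x : ℂ)) < r := Metric.mem_ball.mp hw.2
            rw [Complex.dist_eq] at hd
            have h1 : |(w - (x : ℂ)).re| ≤ ‖w - (x : ℂ)‖ := Complex.abs_re_le_norm _
            have h2 : (w - (x : ℂ)).re = w.re - x := by simp
            rw [h2] at h1
            have h3 := abs_lt.mp (lt_of_le_of_lt h1 hd)
            have h4 : r ≤ x - a := min_le_left _ _
            have h5 : r ≤ b - x := min_le_right _ _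
            exact ⟨by linarith [h3.1], by linarith [h3.2]⟩
          have hcw : ContinuousWithinAt (fun w : ℂ => w.re)
              ({w : ℂ | w.im = 0} ∩ Metric.ball ((x : ℂ)) r) ((x : ℂ)) :=
            Complex.continuous_re.continuousWithinAt
          have := hcw.tendsto_nhdsWithin hmt
          simpa using this
        have t2 := hFc.tendsto.comp t1
        refine t2.congr' (eventuallyEq_of_mem self_mem_nhdsWithin fun w hw => ?_)
        have hw0 : w.im = 0 := hw.1
        show F w.re = H w
        rw [hHdef]
        simp only
        rw [if_neg (by rw [hw0]; exact lt_irrefl 0), if_neg (by rw [hw0]; exact lt_irrefl 0)]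
    · have h1 : ContinuousAt f z := (hfd z hpos).continuousAt
      exact ((h1.congr (eventuallyEq_of_mem (hUo.mem_nhds hpos) fun w hw =>
        (hHU w hw).symm))).continuousWithinAt
  -- full differentiability via Morera
  have Hd' : ∀ z ∈ s, DifferentiableAt ℂ H z := by
    intro z hz
    by_cases him : z.im = 0
    · obtain ⟨ε, hε, hball⟩ := Metric.isOpen_iff.mp hso z hz
      have hQ'sub : Ioo (z.re - ε / 2) (z.re + ε / 2) ×ℂ Ioo (z.im - ε / 2) (z.im + ε / 2) ⊆ s := by
        intro w hw
        rw [mem_reProdIm] at hw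
        apply hball
        rw [Metric.mem_ball, Complex.dist_eq]
        have h1 := Complex.norm_le_abs_re_add_abs_im (w - z)
        have h2 : |(w - z).re| < ε / 2 := by
          rw [Complex.sub_re, abs_lt]
          rcases hw.1 with ⟨ha1, ha2⟩
          constructor <;> linarith
        have h3 : |(w - z).im| < ε / 2 := by
          rw [Complex.sub_im, abs_lt]
          rcases hw.2 with ⟨ha1, ha2⟩
          constructor <;> linarith
        linarith
      exact differentiableAt_of_rectSum (Hc.mono hQ'sub)
        (fun p q hpq => rectSum_eq_zero Hc Hd p q (hpq.trans hQ'sub)) z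
        (by rw [mem_reProdIm]; constructor <;> (constructor <;> linarith [hε]))
    · exact Hd z hz him
  have HdOn : DifferentiableOn ℂ H s := fun z hz => (Hd' z hz).differentiableWithinAt
  have HA : AnalyticOnNhd ℂ H s := HdOn.analyticOnNhd hso
  have HAd : AnalyticOnNhd ℂ (deriv H) s := HA.deriv
  -- derivative identities
  have eqU : ∀ z ∈ U, deriv H z = deriv f z := fun z hz =>
    Filter.EventuallyEq.deriv_eq (eventuallyEq_of_mem (hUo.mem_nhds hz) hHU)
  have eqL : ∀ z ∈ L, deriv H z = -((starRingEnd ℂ) (deriv g ((starRingEnd ℂ) z))) := by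
    intro z hz
    have h1 : deriv H z = deriv (fun w => -((starRingEnd ℂ) (g ((starRingEnd ℂ) w)))) z :=
      Filter.EventuallyEq.deriv_eq (eventuallyEq_of_mem (hLo.mem_nhds hz) hHL)
    rw [h1, (hkd z hz).deriv]
  -- vanishing of the reflected derivative on the boundary interval
  have hzero : ∀ x ∈ Ioo a b, deriv H ((x : ℂ)) = 0 := by
    intro x hx
    have hxs : ((x : ℂ)) ∈ s := hQs (by
      rw [mem_reProdIm]
      constructor
      · simpa using hx
      · simp)
    haveI := neBot_im_pos x
    haveI := neBot_im_neg x
    have hcA : ContinuousAt (deriv H) ((x : ℂ)) := ((HAd _ hxs).continuousAt)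
    have tU0 : Tendsto (deriv H) (𝓝[U] (x : ℂ)) (𝓝 (deriv H ((x : ℂ)))) :=
      hcA.continuousWithinAt
    have tU1 : Tendsto (deriv H) (𝓝[U] (x : ℂ)) (𝓝 (F' x)) :=
      (hF' x hx).congr' (eventuallyEq_of_mem self_mem_nhdsWithin fun w hw => (eqU w hw).symm)
    have e1 : deriv H ((x : ℂ)) = F' x := tendsto_nhds_unique tU0 tU1
    have tL0 : Tendsto (deriv H) (𝓝[L] (x : ℂ)) (𝓝 (deriv H ((x : ℂ)))) :=
      hcA.continuousWithinAt
    have hstarc : Continuous fun y : ℂ => (starRingEnd ℂ) y := continuous_star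
    have t2 := (hG' x hx).comp (tendsto_conj_L_U x)
    have t3 := ((hstarc.tendsto (G' x)).comp t2).neg
    have tL1 : Tendsto (deriv H) (𝓝[L] (x : ℂ)) (𝓝 (-((starRingEnd ℂ) (G' x)))) := by
      refine t3.congr' (eventuallyEq_of_mem self_mem_nhdsWithin fun w hw => ?_)
      exact (eqL w hw).symm
    have e2 : deriv H ((x : ℂ)) = -((starRingEnd ℂ) (G' x)) := tendsto_nhds_unique tL0 tL1
    have hc : (starRingEnd ℂ) (G' x) = F' x := by linear_combination hnorm x hx
    rw [hc] at e2
    have : F' x = 0 := by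
      have h := e1.symm.trans e2
      linear_combination h / 2
    rw [e1, this]
  -- identity theorem on U ∪ Q
  set D0 : Set ℂ := U ∪ Q with hD0def
  have hD0s : D0 ⊆ s := union_subset hUs hQs
  have hQconv : Convex ℝ Q := by
    have h1 : Convex ℝ (Complex.re ⁻¹' Ioo a b) := by
      have := (convex_Ioo a b).linear_preimage Complex.reLm
      simpa using this
    have h2 : Convex ℝ (Complex.im ⁻¹' Ioo (-1 : ℝ) 1) := by
      have := (convex_Ioo (-1 : ℝ) 1).linear_preimage Complex.imLm
      simpa using this
    exact h1.inter h2
  have hUconv : Convex ℝ U := convex_halfSpace_im_gt 0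
  set pt : ℂ := ((a + b) / 2 : ℝ) + ((1 : ℝ) / 2 : ℝ) * I with hptdef
  have hptU : pt ∈ U := by
    simp only [hUdef, mem_setOf_eq, hptdef]
    simp
  have hptQ : pt ∈ Q := by
    rw [mem_reProdIm]
    constructor
    · simp only [hptdef]
      simp
      constructor <;> linarith
    · simp only [hptdef]
      simp
      norm_num
  have hD0pre : IsPreconnected D0 :=
    IsPreconnected.union pt hptU hptQ hUconv.isPreconnected hQconv.isPreconnected
  set c0 : ℝ := (a + b) / 2 with hc0def
  have hc0ab : c0 ∈ Ioo a b := by constructor <;> (simp only [hc0def]; linarith)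
  have hc0D0 : ((c0 : ℂ)) ∈ D0 := Or.inr (by
    rw [mem_reProdIm]
    refine ⟨by simpa using hc0ab, by simp⟩)
  have hfreq : ∃ᶠ w in 𝓝[≠] ((c0 : ℂ)), deriv H w = 0 := by
    set u : ℕ → ℝ := fun n => c0 + (b - a) / 4 * (1 / (n + 1)) with hudef
    have hun : ∀ n : ℕ, u n ∈ Ioo a b := by
      intro n
      have h1 : 0 < (1 : ℝ) / (n + 1) := by positivity
      have h2 : (1 : ℝ) / (n + 1) ≤ 1 := by
        rw [div_le_one (by positivity)]
        simp
      have h3 : 0 < (b - a) / 4 * (1 / (n + 1)) := by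
        apply mul_pos _ h1; linarith
      have h4 : (b - a) / 4 * (1 / (n + 1)) ≤ (b - a) / 4 := by
        nlinarith
      constructor <;> (simp only [hudef, hc0def]; nlinarith)
    have hlim : Tendsto (fun n : ℕ => ((u n : ℝ) : ℂ)) atTop (𝓝[≠] ((c0 : ℂ))) := by
      rw [tendsto_nhdsWithin_iff]
      constructor
      · apply (Complex.continuous_ofReal.tendsto _).comp
        have h0 : Tendsto (fun n : ℕ => (1 : ℝ) / (n + 1)) atTop (𝓝 0) :=
          tendsto_one_div_add_atTop_nhds_zero_nat
        have h1 : Tendsto (fun n : ℕ => (b - a) / 4 * (1 / (n + 1))) atTop (𝓝 0) := by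
          have := h0.const_mul ((b - a) / 4)
          simpa using this
        have := h1.const_add c0
        simpa [hudef] using this
      · apply Eventually.of_forall
        intro n
        simp only [mem_compl_iff, mem_singleton_iff]
        rw [Complex.ofReal_inj]
        have h1 : 0 < (b - a) / 4 * (1 / (n + 1)) := by
          have hba : (0:ℝ) < b - a := by linarith
          positivity
        simp only [hudef]
        intro hcc
        nlinarith [hcc]
    exact hlim.frequently (Frequently.of_forall fun n => hzero (u n) (hun n))
  have hEq0 : EqOn (deriv H) 0 D0 :=
    (HAd.mono hD0s).eqOn_zero_of_preconnected_of_frequently_eq_zero hD0pre hc0D0 hfreq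
  -- f is constant on U
  have hder0U : ∀ z ∈ U, deriv f z = 0 := fun z hz => by
    rw [← eqU z hz]; exact hEq0 (Or.inl hz)
  have hconstf : ∀ z ∈ U, f z = f pt := by
    intro z hz
    apply hUconv.is_const_of_fderivWithin_eq_zero hf _ hz hptU
    intro w hw
    rw [fderivWithin_of_isOpen hUo hw]
    ext1
    simp [← toSpanSingleton_deriv, hder0U w hw]
  -- g is constant on U
  have hder0g : ∀ w ∈ U ∩ Q, deriv g w = 0 := by
    intro w hw
    have hwc : (starRingEnd ℂ) w ∈ Q := by
      have h1 := mem_reProdIm.mp hw.2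
      rw [mem_reProdIm]
      refine ⟨by simpa using h1.1, ?_⟩
      have h2 := h1.2
      simp only [Complex.conj_im]
      rw [mem_Ioo] at h2 ⊢
      rcases h2 with ⟨ha1, ha2⟩
      constructor <;> linarith
    have hwcL : (starRingEnd ℂ) w ∈ L := by
      have : 0 < w.im := hw.1
      simp only [hLdef, mem_setOf_eq, Complex.conj_im]
      linarith
    have h1 : deriv H ((starRingEnd ℂ) w) = 0 := hEq0 (Or.inr hwc)
    rw [eqL _ hwcL] at h1
    have h2 : (starRingEnd ℂ) (deriv g ((starRingEnd ℂ) ((starRingEnd ℂ) w))) = 0 := by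
      linear_combination -h1
    rw [Complex.conj_conj] at h2
    exact star_eq_zero.mp h2
  have hgA : AnalyticOnNhd ℂ (deriv g) U := (hg.analyticOnNhd hUo).deriv
  have hgEq0 : EqOn (deriv g) 0 U := by
    apply hgA.eqOn_zero_of_preconnected_of_eventuallyEq_zero hUconv.isPreconnected hptU
    exact eventuallyEq_of_mem ((hUo.inter hQo).mem_nhds ⟨hptU, hptQ⟩) (fun w hw => hder0g w hw)
  have hconstg : ∀ z ∈ U, g z = g pt := by
    intro z hz
    apply hUconv.is_const_of_fderivWithin_eq_zero hg _ hz hptU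
    intro w hw
    rw [fderivWithin_of_isOpen hUo hw]
    ext1
    simp [← toSpanSingleton_deriv, hgEq0 hw]
  -- compute the constants via the boundary values at c0
  haveI := neBot_im_pos c0
  have hκ : F c0 = f pt :=
    tendsto_nhds_unique (hF c0 hc0ab)
      ((tendsto_const_nhds).congr'
        (eventuallyEq_of_mem self_mem_nhdsWithin fun w hw => (hconstf w hw).symm))
  have hGl : G c0 = g pt :=
    tendsto_nhds_unique (hG c0 hc0ab)
      ((tendsto_const_nhds).congr'
        (eventuallyEq_of_mem self_mem_nhdsWithin fun w hw => (hconstg w hw).symm))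
  intro z hz
  have hzU : z ∈ U := hz
  rw [hconstf z hzU, hconstg z hzU, ← hκ, ← hGl]
  exact hval c0 hc0ab
end

section
/- Uniqueness in the domain of null dependence for the flat two-dimensional wave equation: let a < b be real numbers and let u : ℝ × ℝ → ℂ (coordinates (t,x)) be twice continuously differentiable on an open set containing the diamond D = {(t,x) : a + |t| ≤ x ≤ b − |t|}, satisfying ∂²u/∂t² = ∂²u/∂x² there. If u(0,x) = 0 and (∂u/∂t)(0,x) = 0 for all x ∈ [a,b], then u(t,x) = 0 for every (t,x) ∈ D. -/
open Set

/-- Uniqueness in the domain of null dependence for the flat two-dimensional wave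
equation: if `u` is `C²` on an open set containing the diamond
`D = {(t,x) : a + |t| ≤ x ≤ b − |t|}`, solves `∂²u/∂t² = ∂²u/∂x²` there, and has zero
Cauchy data `u(0,x) = 0`, `∂u/∂t(0,x) = 0` for `x ∈ [a,b]`, then `u` vanishes on `D`. -/
theorem wave_equation_null_dependence_uniqueness
    (a b : ℝ) (hab : a < b) (u : ℝ × ℝ → ℂ)
    (V : Set (ℝ × ℝ)) (hV : IsOpen V)
    (hDV : {p : ℝ × ℝ | a + |p.1| ≤ p.2 ∧ p.2 ≤ b - |p.1|} ⊆ V)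
    (hC2 : ContDiffOn ℝ 2 u V)
    (hwave : ∀ p ∈ V,
      fderiv ℝ (fun q : ℝ × ℝ => fderiv ℝ u q (1, 0)) p (1, 0) =
      fderiv ℝ (fun q : ℝ × ℝ => fderiv ℝ u q (0, 1)) p (0, 1))
    (hdata : ∀ x ∈ Icc a b, u (0, x) = 0)
    (hdata' : ∀ x ∈ Icc a b, fderiv ℝ u (0, x) (1, 0) = 0) :
    ∀ p : ℝ × ℝ, a + |p.1| ≤ p.2 → p.2 ≤ b - |p.1| → u p = 0 := by
  -- basic differentiability facts
  have hdiffu : ∀ q ∈ V, DifferentiableAt ℝ u q := fun q hq =>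
    (hC2.differentiableOn (by norm_num)).differentiableAt (hV.mem_nhds hq)
  have hC1' : ContDiffOn ℝ 1 (fderiv ℝ u) V := hC2.fderiv_of_isOpen hV (by norm_num)
  have hdiff' : ∀ q ∈ V, HasFDerivAt (fderiv ℝ u) (fderiv ℝ (fderiv ℝ u) q) q := fun q hq =>
    ((hC1'.differentiableOn one_ne_zero q hq).differentiableAt (hV.mem_nhds hq)).hasFDerivAt
  -- the second derivative in coordinates
  have hA : ∀ q ∈ V, ∀ w v : ℝ × ℝ,
      fderiv ℝ (fun r => fderiv ℝ u r w) q v = fderiv ℝ (fderiv ℝ u) q v w := by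
    intro q hq w v
    have hcomp := ((ContinuousLinearMap.apply ℝ ℂ w).hasFDerivAt.comp q (hdiff' q hq)).fderiv
    have heq : (fun r => fderiv ℝ u r w) =
        (ContinuousLinearMap.apply ℝ ℂ w) ∘ (fderiv ℝ u) := by
      funext r; simp
    rw [heq, hcomp]; rfl
  -- symmetry of second derivatives
  have hsymm : ∀ q ∈ V, ∀ v w : ℝ × ℝ,
      fderiv ℝ (fderiv ℝ u) q v w = fderiv ℝ (fderiv ℝ u) q w v := by
    intro q hq v w
    exact second_derivative_symmetric_of_eventually
      (Filter.eventually_of_mem (hV.mem_nhds hq) fun r hr => (hdiffu r hr).hasFDerivAt)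
      (hdiff' q hq) v w
  -- the key vanishing of the second derivative in null directions
  have hkey : ∀ q ∈ V, fderiv ℝ (fderiv ℝ u) q (1, 1) ((1 : ℝ), (-1 : ℝ)) = 0 := by
    intro q hq
    have hw := hwave q hq
    rw [hA q hq (1, 0) (1, 0), hA q hq (0, 1) (0, 1)] at hw
    have hs := hsymm q hq (1, 0) (0, 1)
    have e1 : ((1 : ℝ), (1 : ℝ)) = ((1 : ℝ), (0 : ℝ)) + ((0 : ℝ), (1 : ℝ)) := by
      simp [Prod.ext_iff]
    have e2 : ((1 : ℝ), (-1 : ℝ)) = ((1 : ℝ), (0 : ℝ)) - ((0 : ℝ), (1 : ℝ)) := by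
      simp [Prod.ext_iff]
    rw [e1, e2, map_add, ContinuousLinearMap.add_apply, map_sub, map_sub, hw, hs]
    ring
  -- spatial derivative of the Cauchy data vanishes (including endpoints, by continuity)
  have hdx : ∀ c ∈ Icc a b, fderiv ℝ u ((0 : ℝ), c) ((0 : ℝ), (1 : ℝ)) = 0 := by
    have hVdata : ∀ c ∈ Icc a b, ((0 : ℝ), c) ∈ V := by
      intro c hc
      exact hDV ⟨by simpa using hc.1, by simpa using hc.2⟩
    have hIoo : ∀ c ∈ Ioo a b, fderiv ℝ u ((0 : ℝ), c) ((0 : ℝ), (1 : ℝ)) = 0 := by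
      intro c hc
      have hcurve : HasDerivAt (fun y : ℝ => ((0 : ℝ), y)) ((0 : ℝ), (1 : ℝ)) c :=
        HasDerivAt.prodMk (hasDerivAt_const c (0 : ℝ)) (hasDerivAt_id c)
      have hd : HasDerivAt (fun y : ℝ => u (0, y))
          (fderiv ℝ u ((0 : ℝ), c) ((0 : ℝ), (1 : ℝ))) c :=
        (hdiffu _ (hVdata c (Ioo_subset_Icc_self hc))).hasFDerivAt.comp_hasDerivAt c hcurve
      have hzero : HasDerivAt (fun y : ℝ => u (0, y)) 0 c := by
        have h0 : (fun _ : ℝ => (0 : ℂ)) =ᶠ[nhds c] fun y : ℝ => u (0, y) := by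
          filter_upwards [Ioo_mem_nhds hc.1 hc.2] with y hy
          exact (hdata y (Ioo_subset_Icc_self hy)).symm
        exact (hasDerivAt_const c (0 : ℂ)).congr_of_eventuallyEq h0.symm
      exact hd.unique hzero
    intro c hc
    have hcontF : ContinuousAt (fun y : ℝ => fderiv ℝ u ((0 : ℝ), y) ((0 : ℝ), (1 : ℝ))) c := by
      have h1 : ContinuousAt (fderiv ℝ u) ((0 : ℝ), c) :=
        (hC2.continuousOn_fderiv_of_isOpen hV (by norm_num)).continuousAt
          (hV.mem_nhds (hVdata c hc))
      have h2 : ContinuousAt (fun y : ℝ => ((0 : ℝ), y)) c := by fun_prop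
      exact ((ContinuousLinearMap.apply ℝ ℂ ((0 : ℝ), (1 : ℝ))).continuous.continuousAt).comp
        (h1.comp h2)
    have hclos : c ∈ closure (Ioo a b) := by rw [closure_Ioo hab.ne]; exact hc
    have hne : (nhdsWithin c (Ioo a b)).NeBot := mem_closure_iff_nhdsWithin_neBot.1 hclos
    have ht1 : Filter.Tendsto (fun y : ℝ => fderiv ℝ u ((0 : ℝ), y) ((0 : ℝ), (1 : ℝ)))
        (nhdsWithin c (Ioo a b)) (nhds (fderiv ℝ u ((0 : ℝ), c) ((0 : ℝ), (1 : ℝ)))) :=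
      hcontF.tendsto.mono_left nhdsWithin_le_nhds
    have ht2 : Filter.Tendsto (fun y : ℝ => fderiv ℝ u ((0 : ℝ), y) ((0 : ℝ), (1 : ℝ)))
        (nhdsWithin c (Ioo a b)) (nhds 0) := by
      refine Filter.Tendsto.congr' ?_ tendsto_const_nhds
      filter_upwards [self_mem_nhdsWithin] with y hy
      exact (hIoo y hy).symm
    exact tendsto_nhds_unique ht1 ht2
  -- the field ∂_t u − ∂_x u vanishes on the whole diamond
  have hnull : ∀ q : ℝ × ℝ, a + |q.1| ≤ q.2 → q.2 ≤ b - |q.1| →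
      fderiv ℝ u q ((1 : ℝ), (-1 : ℝ)) = 0 := by
    rintro ⟨t, x⟩ h1 h2
    simp only at h1 h2
    set c : ℝ → ℝ × ℝ := fun s => (s * t, x - t + s * t) with hc
    have hmem : ∀ s ∈ Icc (0 : ℝ) 1,
        a + |(c s).1| ≤ (c s).2 ∧ (c s).2 ≤ b - |(c s).1| := by
      intro s hs
      have habs : |s * t| = s * |t| := by
        rw [abs_mul, abs_of_nonneg hs.1]
      have h3 : (0 : ℝ) ≤ (1 - s) * (|t| - t) :=
        mul_nonneg (by linarith [hs.2]) (by linarith [le_abs_self t])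
      have h4 : (0 : ℝ) ≤ (1 - s) * (|t| + t) :=
        mul_nonneg (by linarith [hs.2]) (by linarith [neg_abs_le t])
      constructor
      · simp only [hc, habs]; nlinarith
      · simp only [hc, habs]; nlinarith
    have hmemV : ∀ s ∈ Icc (0 : ℝ) 1, c s ∈ V := fun s hs => hDV (hmem s hs)
    have hcderiv : ∀ s : ℝ, HasDerivAt c (t, t) s := by
      intro s
      have hd1 : HasDerivAt (fun s : ℝ => s * t) t s := by
        simpa using (hasDerivAt_id s).mul_const t
      exact HasDerivAt.prodMk hd1 (hd1.const_add (x - t))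
    set φ : ℝ → ℂ := fun s => fderiv ℝ u (c s) ((1 : ℝ), (-1 : ℝ)) with hφdef
    have hφ : ∀ s ∈ Icc (0 : ℝ) 1, HasDerivAt φ 0 s := by
      intro s hs
      have hq := hmemV s hs
      have hF : HasFDerivAt (fun r => fderiv ℝ u r ((1 : ℝ), (-1 : ℝ)))
          ((ContinuousLinearMap.apply ℝ ℂ ((1 : ℝ), (-1 : ℝ))).comp
            (fderiv ℝ (fderiv ℝ u) (c s))) (c s) := by
        have heq : (fun r => fderiv ℝ u r ((1 : ℝ), (-1 : ℝ))) =
            (ContinuousLinearMap.apply ℝ ℂ ((1 : ℝ), (-1 : ℝ))) ∘ (fderiv ℝ u) := by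
          funext r; simp
        rw [heq]
        exact (ContinuousLinearMap.apply ℝ ℂ ((1 : ℝ), (-1 : ℝ))).hasFDerivAt.comp _
          (hdiff' _ hq)
      have hcomp := hF.comp_hasDerivAt s (hcderiv s)
      have hval : ((ContinuousLinearMap.apply ℝ ℂ ((1 : ℝ), (-1 : ℝ))).comp
          (fderiv ℝ (fderiv ℝ u) (c s))) ((t : ℝ), t) = 0 := by
        have h11 : ((t : ℝ), t) = t • ((1 : ℝ), (1 : ℝ)) := by simp [Prod.ext_iff]
        rw [h11]
        simp only [ContinuousLinearMap.comp_apply, ContinuousLinearMap.apply_apply,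
          map_smul, ContinuousLinearMap.smul_apply]
        rw [hkey (c s) hq]
        simp
      rw [hval] at hcomp
      exact hcomp
    have hcont : ContinuousOn φ (Icc 0 1) := fun s hs => ((hφ s hs).continuousAt).continuousWithinAt
    have hconst := constant_of_has_deriv_right_zero hcont
      (fun s hs => ((hφ s (Ico_subset_Icc_self hs)).hasDerivWithinAt))
    have hφ10 : φ 1 = φ 0 := hconst 1 (right_mem_Icc.2 zero_le_one)
    have hc1 : c 1 = (t, x) := by simp [hc]
    have hc0 : c 0 = ((0 : ℝ), x - t) := by simp [hc]
    have hxt : x - t ∈ Icc a b := by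
      constructor
      · linarith [le_abs_self t, h1]
      · linarith [neg_abs_le t, h2]
    have hφ0 : φ 0 = 0 := by
      rw [hφdef]
      simp only [hc0]
      have e2 : ((1 : ℝ), (-1 : ℝ)) = ((1 : ℝ), (0 : ℝ)) - ((0 : ℝ), (1 : ℝ)) := by
        simp [Prod.ext_iff]
      rw [e2, map_sub, hdata' _ hxt, hdx _ hxt, sub_zero]
    have := hφ10.trans hφ0
    rw [hφdef] at this
    simpa [hc1] using this
  -- integrate `u` along the other characteristic
  rintro ⟨t, x⟩ h1 h2
  simp only at h1 h2
  set c : ℝ → ℝ × ℝ := fun s => (s * t, x + t - s * t) with hc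
  have hmem : ∀ s ∈ Icc (0 : ℝ) 1,
      a + |(c s).1| ≤ (c s).2 ∧ (c s).2 ≤ b - |(c s).1| := by
    intro s hs
    have habs : |s * t| = s * |t| := by rw [abs_mul, abs_of_nonneg hs.1]
    have h3 : (0 : ℝ) ≤ (1 - s) * (|t| - t) :=
      mul_nonneg (by linarith [hs.2]) (by linarith [le_abs_self t])
    have h4 : (0 : ℝ) ≤ (1 - s) * (|t| + t) :=
      mul_nonneg (by linarith [hs.2]) (by linarith [neg_abs_le t])
    constructor
    · simp only [hc, habs]; nlinarith
    · simp only [hc, habs]; nlinarith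
  have hmemV : ∀ s ∈ Icc (0 : ℝ) 1, c s ∈ V := fun s hs => hDV (hmem s hs)
  have hcderiv : ∀ s : ℝ, HasDerivAt c (t, -t) s := by
    intro s
    have hd1 : HasDerivAt (fun s : ℝ => s * t) t s := by
      simpa using (hasDerivAt_id s).mul_const t
    have hd2 : HasDerivAt (fun s : ℝ => x + t - s * t) (-t) s := by
      simpa using (hd1.const_sub (x + t))
    exact HasDerivAt.prodMk hd1 hd2
  set ψ : ℝ → ℂ := fun s => u (c s) with hψdef
  have hψ : ∀ s ∈ Icc (0 : ℝ) 1, HasDerivAt ψ 0 s := by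
    intro s hs
    have hq := hmemV s hs
    have hcomp := (hdiffu _ hq).hasFDerivAt.comp_hasDerivAt s (hcderiv s)
    have hval : fderiv ℝ u (c s) ((t : ℝ), -t) = 0 := by
      have h11 : ((t : ℝ), -t) = t • ((1 : ℝ), (-1 : ℝ)) := by simp [Prod.ext_iff]
      rw [h11, map_smul, hnull (c s) (hmem s hs).1 (hmem s hs).2, smul_zero]
    rw [hval] at hcomp
    exact hcomp
  have hcont : ContinuousOn ψ (Icc 0 1) := fun s hs => ((hψ s hs).continuousAt).continuousWithinAt
  have hconst := constant_of_has_deriv_right_zero hcont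
    (fun s hs => ((hψ s (Ico_subset_Icc_self hs)).hasDerivWithinAt))
  have hψ10 : ψ 1 = ψ 0 := hconst 1 (right_mem_Icc.2 zero_le_one)
  have hc1 : c 1 = (t, x) := by simp [hc]
  have hc0 : c 0 = ((0 : ℝ), x + t) := by simp [hc]
  have hxt : x + t ∈ Icc a b := by
    constructor
    · linarith [neg_abs_le t, h1]
    · linarith [le_abs_self t, h2]
  have hψ0 : ψ 0 = 0 := by
    rw [hψdef]; simp only [hc0]; exact hdata _ hxt
  have := hψ10.trans hψ0
  rw [hψdef] at this
  simpa [hc1] using this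
end
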